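/- For nonnegative integers n, k, r1, r2 with r1 ≤ r2, the (r1,r2)-Stirling number of the second kind satisfies {n+r1+r2 brace k+r2}_{r1,r2} = Σ_{j=0}^{r1} (−1)^{r1−j} · s_abs(r1, j) · {n+j+r2 brace k+r2}_{r2}, where s_abs is the unsigned Stirling number of the first kind. -/

import Mathlib

open Finset

/-- `𝒜` is a set partition of `Fin N`: blocks are nonempty and every element
lies in exactly one block. -/
def IsSetPartition {N : ℕ} (𝒜 : Finset (Finset (Fin N))) : Prop :=
  (∀ t ∈ 𝒜, t.Nonempty) ∧ ∀ x : Fin N, ∃! t, t ∈ 𝒜 ∧ x ∈ t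

/-- The elements of `S` lie in pairwise distinct blocks of `𝒜`. -/
def DistinctBlocks {N : ℕ} (𝒜 : Finset (Finset (Fin N))) (S : Set (Fin N)) : Prop :=
  ∀ a ∈ S, ∀ b ∈ S, a ≠ b → ∀ t ∈ 𝒜, ¬(a ∈ t ∧ b ∈ t)

/-- The `r`-Stirling number of the second kind `{n+r brace k+r}_r`: the number of
partitions of `{1,…,n+r}` into `k+r` nonempty blocks with `1,…,r` in distinct blocks. -/
noncomputable def rStirling (r n k : ℕ) : ℕ :=
  Nat.card {𝒜 : Finset (Finset (Fin (n + r))) //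
    IsSetPartition 𝒜 ∧ 𝒜.card = k + r ∧ DistinctBlocks 𝒜 {x | (x : ℕ) < r}}

/-- The `(r₁,r₂)`-Stirling number of the second kind `{n+r₁+r₂ brace k+r₂}_{r₁,r₂}`. -/
noncomputable def rrStirling (r₁ r₂ n k : ℕ) : ℕ :=
  Nat.card {𝒜 : Finset (Finset (Fin (n + r₁ + r₂))) //
    IsSetPartition 𝒜 ∧ 𝒜.card = k + r₂ ∧
    DistinctBlocks 𝒜 {x | (x : ℕ) < r₁} ∧
    DistinctBlocks 𝒜 {x | r₁ ≤ (x : ℕ) ∧ (x : ℕ) < r₁ + r₂}}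

/-- The `r`-Bell polynomial `B_n(z;r) = Σ_{k=0}^n {n+r brace k+r}_r z^k`. -/
noncomputable def rBell (r n : ℕ) (z : ℝ) : ℝ :=
  ∑ k ∈ range (n + 1), (rStirling r n k : ℝ) * z ^ k

/-- The `(r₁,r₂)`-Bell polynomial `B_n(z;r₁,r₂) = Σ_{k=0}^{n+r₁} {n+r₁+r₂ brace k+r₂}_{r₁,r₂} z^k`. -/
noncomputable def rrBell (r₁ r₂ n : ℕ) (z : ℝ) : ℝ :=
  ∑ k ∈ range (n + r₁ + 1), (rrStirling r₁ r₂ n k : ℝ) * z ^ k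

/-- The unsigned Stirling number of the first kind, via the standard recurrence. -/
def sabs : ℕ → ℕ → ℕ
  | 0, 0 => 1
  | 0, _ + 1 => 0
  | _ + 1, 0 => 0
  | n + 1, k + 1 => n * sabs n (k + 1) + sabs n k

/-!
Adjoining a new point to the ground set acts on the sequence `K ↦ #{partitions into K blocks
separating the prescribed sets}` by the operator `T f (K) = K f(K) + f(K - 1)` when the point is
free, and by `T - r` when it must be separated from `r` prescribed points: those points occupy
`r` distinct blocks, which the new point may not join. Peeling off the `r₁` points one at a time
shows that the `(r₁, r₂)`-counts are the falling factorial `T (T - 1) ⋯ (T - r₁ + 1)` applied to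
the `r₂`-counts, and `Tʲ` applied to the `r₂`-counts on `n` points gives those on `n + j`
points. Expanding `x (x - 1) ⋯ (x - r₁ + 1) = ∑ⱼ (-1)^(r₁ - j) |s(r₁, j)| xʲ` gives the identity.
-/

open Function Polynomial

variable {α β : Type*}

def IsBlockPartition (𝒜 : Finset (Finset α)) : Prop :=
  (∀ u ∈ 𝒜, u.Nonempty) ∧ ∀ x : α, ∃! u, u ∈ 𝒜 ∧ x ∈ u

def Separates [DecidableEq α] (𝒜 : Finset (Finset α)) (s : Finset α) : Prop :=
  ∀ u ∈ 𝒜, #(u ∩ s) ≤ 1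

/-- Integer-valued, so that operators with negative coefficients act on it. -/
noncomputable def blockCounts (α : Type*) [DecidableEq α] (s t : Finset α) (K : ℕ) : ℤ :=
  Nat.card {𝒜 : Finset (Finset α) //
    IsBlockPartition 𝒜 ∧ #𝒜 = K ∧ Separates 𝒜 s ∧ Separates 𝒜 t}

theorem isBlockPartition_iff {𝒜 : Finset (Finset α)} :
    IsBlockPartition 𝒜 ↔ (∀ u ∈ 𝒜, u.Nonempty) ∧ (∀ x, ∃ u ∈ 𝒜, x ∈ u) ∧
      ∀ u ∈ 𝒜, ∀ v ∈ 𝒜, ∀ x, x ∈ u → x ∈ v → u = v := by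
  refine and_congr_right fun _ => ⟨fun h => ⟨fun x => ?_, fun u hu v hv x hxu hxv => ?_⟩,
    fun ⟨hcov, hdisj⟩ x => ?_⟩
  · obtain ⟨u, hu, -⟩ := h x
    exact ⟨u, hu⟩
  · exact (h x).unique ⟨hu, hxu⟩ ⟨hv, hxv⟩
  · obtain ⟨u, hu, hxu⟩ := hcov x
    exact ⟨u, ⟨hu, hxu⟩, fun v ⟨hv, hxv⟩ => hdisj v hv u hu x hxv hxu⟩

namespace IsBlockPartition

variable {𝒜 : Finset (Finset α)}

theorem eq_of_mem (h : IsBlockPartition 𝒜) {u v : Finset α} (hu : u ∈ 𝒜) (hv : v ∈ 𝒜) {x : α}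
    (hxu : x ∈ u) (hxv : x ∈ v) : u = v :=
  (h.2 x).unique ⟨hu, hxu⟩ ⟨hv, hxv⟩

theorem empty_notMem (h : IsBlockPartition 𝒜) : ∅ ∉ 𝒜 :=
  fun h0 => (h.1 ∅ h0).ne_empty rfl

variable [DecidableEq α]

theorem erase_insert_empty (h : IsBlockPartition 𝒜) {b : Finset α} (hb : b ∈ insert ∅ 𝒜) :
    (insert b 𝒜).erase ∅ = 𝒜 := by
  rcases mem_insert.1 hb with rfl | hb
  · exact erase_insert h.empty_notMem
  · rw [insert_eq_of_mem hb, erase_eq_of_notMem h.empty_notMem]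

/-- The blocks meeting `s` correspond to the points of `s`. -/
theorem card_filter_disjoint_add_card (h : IsBlockPartition 𝒜) {s : Finset α}
    (hs : Separates 𝒜 s) : #{u ∈ 𝒜 | Disjoint u s} + #s = #𝒜 := by
  choose block hblock using fun x => (h.2 x).exists
  have hmeet : #{u ∈ 𝒜 | ¬Disjoint u s} = #s := by
    refine (card_bij (fun a _ => block a) (fun a ha => ?_) (fun a ha b hb hab => ?_)
      fun u hu => ?_).symm
    · exact mem_filter.2 ⟨(hblock a).1, not_disjoint_iff.2 ⟨a, (hblock a).2, ha⟩⟩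
    · exact card_le_one.1 (hs _ (hblock a).1) a (mem_inter.2 ⟨(hblock a).2, ha⟩) b
        (mem_inter.2 ⟨hab ▸ (hblock b).2, hb⟩)
    · obtain ⟨hu, hmeet⟩ := mem_filter.1 hu
      obtain ⟨a, hau, has⟩ := not_disjoint_iff.1 hmeet
      exact ⟨a, has, h.eq_of_mem (hblock a).1 hu (hblock a).2 hau⟩
  rw [← hmeet, card_filter_add_card_filter_not]

theorem card_filter_insert_empty (h : IsBlockPartition 𝒜) {s : Finset α} (hs : Separates 𝒜 s)
    (K : ℕ) : (#{b ∈ insert ∅ 𝒜 | Disjoint b s ∧ #(𝒜.erase b) + 1 = K} : ℤ) =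
      (if #𝒜 + 1 = K then 1 else 0) + if #𝒜 = K then (K : ℤ) - #s else 0 := by
  have hblocks : {b ∈ 𝒜 | Disjoint b s ∧ #(𝒜.erase b) + 1 = K} =
      {b ∈ 𝒜 | Disjoint b s ∧ #𝒜 = K} :=
    filter_congr fun b hb => by rw [card_erase_add_one hb]
  have havoid : (#{b ∈ 𝒜 | Disjoint b s} : ℤ) = #𝒜 - #s := by
    rw [eq_sub_iff_add_eq]
    exact_mod_cast h.card_filter_disjoint_add_card hs
  rw [filter_insert, hblocks, erase_eq_of_notMem h.empty_notMem]
  simp only [disjoint_empty_left, true_and]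
  split_ifs with h1 h2 h2
  · omega
  · rw [card_insert_of_notMem fun h' => h.empty_notMem (mem_filter.1 h').1]
    simp [h2]
  · simp [h2, havoid]
  · simp [h2]

end IsBlockPartition

theorem separates_of_card_le_one [DecidableEq α] {𝒜 : Finset (Finset α)} {s : Finset α}
    (hs : #s ≤ 1) : Separates 𝒜 s :=
  fun _ _ => (card_le_card inter_subset_right).trans hs

theorem none_notMem_map_some (v : Finset α) : none ∉ v.map Embedding.some := by simp

theorem some_mem_map_some {v : Finset α} {y : α} : some y ∈ v.map Embedding.some ↔ y ∈ v :=
  mem_map' Embedding.some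

section AdjoinNone

variable [DecidableEq α] {ℬ ℬ' : Finset (Finset α)} {b b' s t : Finset α}

/-- `none` joins the block `b` of `ℬ`, or forms a new singleton block when `b = ∅`. -/
def adjoinNone (ℬ : Finset (Finset α)) (b : Finset α) : Finset (Finset (Option α)) :=
  insert (insertNone b) ((ℬ.erase b).map (mapEmbedding Embedding.some).toEmbedding)

theorem mem_adjoinNone {u : Finset (Option α)} :
    u ∈ adjoinNone ℬ b ↔ u = insertNone b ∨ ∃ v ∈ ℬ, v ≠ b ∧ v.map Embedding.some = u := by
  simp only [adjoinNone, mem_insert, mem_map, mem_erase, RelEmbedding.coe_toEmbedding,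
    mapEmbedding_apply, and_assoc, and_left_comm (b := _ ∈ ℬ)]

theorem eq_insertNone_of_none_mem {u : Finset (Option α)} (hu : u ∈ adjoinNone ℬ b)
    (hnone : none ∈ u) : u = insertNone b := by
  rcases mem_adjoinNone.1 hu with rfl | ⟨v, -, -, rfl⟩
  · rfl
  · exact absurd hnone (none_notMem_map_some v)

theorem card_adjoinNone : #(adjoinNone ℬ b) = #(ℬ.erase b) + 1 := by
  rw [adjoinNone, card_insert_of_notMem, card_map]
  simp only [mem_map, RelEmbedding.coe_toEmbedding, mapEmbedding_apply, not_exists, not_and]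
  intro v _ hv
  exact none_notMem_map_some v (hv ▸ none_mem_insertNone)

theorem image_eraseNone_adjoinNone : (adjoinNone ℬ b).image eraseNone = insert b ℬ := by
  ext v
  simp only [mem_image, mem_adjoinNone, mem_insert]
  constructor
  · rintro ⟨u, rfl | ⟨w, hw, -, rfl⟩, rfl⟩
    · exact Or.inl (eraseNone_insertNone b)
    · exact Or.inr (by rwa [eraseNone_map_some])
  · rintro (rfl | hv)
    · exact ⟨_, Or.inl rfl, eraseNone_insertNone v⟩
    · by_cases hvb : v = b
      · exact ⟨_, Or.inl rfl, hvb ▸ eraseNone_insertNone v⟩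
      · exact ⟨_, Or.inr ⟨v, hv, hvb, rfl⟩, eraseNone_map_some v⟩

theorem isBlockPartition_adjoinNone (hℬ : IsBlockPartition ℬ) (hb : b ∈ insert ∅ ℬ) :
    IsBlockPartition (adjoinNone ℬ b) := by
  have hb' : b.Nonempty → b ∈ ℬ := fun hne =>
    (mem_insert.1 hb).resolve_left hne.ne_empty
  refine isBlockPartition_iff.2 ⟨fun u hu => ?_, fun x => ?_, fun u hu v hv x hxu hxv => ?_⟩
  · rcases mem_adjoinNone.1 hu with rfl | ⟨v, hv, -, rfl⟩
    · exact insertNone_nonempty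
    · exact (hℬ.1 v hv).map
  · cases x with
    | none => exact ⟨_, mem_insert_self _ _, none_mem_insertNone⟩
    | some y =>
      obtain ⟨v, ⟨hv, hyv⟩, -⟩ := hℬ.2 y
      by_cases hvb : v = b
      · exact ⟨_, mem_insert_self _ _, by simpa [hvb] using hyv⟩
      · exact ⟨_, mem_adjoinNone.2 (Or.inr ⟨v, hv, hvb, rfl⟩), by simpa using hyv⟩
  · cases x with
    | none => rw [eq_insertNone_of_none_mem hu hxu, eq_insertNone_of_none_mem hv hxv]
    | some y =>
      have hmix : ∀ w ∈ ℬ, w ≠ b → y ∈ b → y ∈ w → False := fun w hw hwb hyb hyw =>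
        hwb (hℬ.eq_of_mem hw (hb' ⟨y, hyb⟩) hyw hyb)
      rcases mem_adjoinNone.1 hu with rfl | ⟨w, hw, hwb, rfl⟩ <;>
        rcases mem_adjoinNone.1 hv with rfl | ⟨w', hw', hwb', rfl⟩
      · rfl
      · simp only [some_mem_insertNone, some_mem_map_some] at hxu hxv
        exact (hmix w' hw' hwb' hxu hxv).elim
      · simp only [some_mem_insertNone, some_mem_map_some] at hxu hxv
        exact (hmix w hw hwb hxv hxu).elim
      · simp only [some_mem_map_some] at hxu hxv
        rw [hℬ.eq_of_mem hw hw' hxu hxv]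

theorem insertNone_inter_insertNone : insertNone b ∩ insertNone s = insertNone (b ∩ s) := by
  ext (_ | x) <;> simp

theorem map_some_inter_insertNone (v : Finset α) :
    v.map Embedding.some ∩ insertNone s = (v ∩ s).map Embedding.some := by
  ext (_ | x) <;> simp

theorem insertNone_inter_map_some :
    insertNone b ∩ t.map Embedding.some = (b ∩ t).map Embedding.some := by
  ext (_ | x) <;> simp

theorem separates_adjoinNone_iff {s' : Finset (Option α)} :
    Separates (adjoinNone ℬ b) s' ↔
      #(insertNone b ∩ s') ≤ 1 ∧ ∀ v ∈ ℬ, v ≠ b → #(v.map Embedding.some ∩ s') ≤ 1 := by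
  simp only [Separates, mem_adjoinNone, or_imp, forall_and, forall_eq, forall_exists_index,
    and_imp]
  exact and_congr_right'
    ⟨fun h v hv hvb => h _ v hv hvb rfl, fun h _ v hv hvb hu => hu ▸ h v hv hvb⟩

theorem separates_adjoinNone_insertNone_iff :
    Separates (adjoinNone ℬ b) (insertNone s) ↔ Separates ℬ s ∧ Disjoint b s := by
  simp only [separates_adjoinNone_iff, insertNone_inter_insertNone, card_insertNone,
    map_some_inter_insertNone, card_map, add_le_iff_nonpos_left, nonpos_iff_eq_zero,
    card_eq_zero, ← disjoint_iff_inter_eq_empty]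
  refine ⟨fun ⟨hbs, h⟩ => ⟨fun v hv => ?_, hbs⟩, fun ⟨h, hbs⟩ => ⟨hbs, fun v hv _ => h v hv⟩⟩
  rcases eq_or_ne v b with rfl | hvb
  · simp [disjoint_iff_inter_eq_empty.1 hbs]
  · exact h v hv hvb

theorem separates_adjoinNone_map_some_iff (hb : b ∈ insert ∅ ℬ) :
    Separates (adjoinNone ℬ b) (t.map Embedding.some) ↔ Separates ℬ t := by
  simp only [separates_adjoinNone_iff, insertNone_inter_map_some, ← map_inter, card_map]
  refine ⟨fun ⟨hbt, h⟩ v hv => ?_, fun h => ⟨?_, fun v hv _ => h v hv⟩⟩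
  · rcases eq_or_ne v b with rfl | hvb
    · exact hbt
    · exact h v hv hvb
  · rcases mem_insert.1 hb with rfl | hb
    · simp
    · exact h b hb

theorem adjoinNone_inj (hℬ : IsBlockPartition ℬ) (hb : b ∈ insert ∅ ℬ)
    (hℬ' : IsBlockPartition ℬ') (hb' : b' ∈ insert ∅ ℬ')
    (h : adjoinNone ℬ b = adjoinNone ℬ' b') : ℬ = ℬ' ∧ b = b' := by
  have hmem : insertNone b ∈ adjoinNone ℬ' b' := h ▸ mem_insert_self _ _
  obtain rfl : b = b' :=
    insertNone.injective (eq_insertNone_of_none_mem hmem none_mem_insertNone)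
  refine ⟨?_, rfl⟩
  rw [← hℬ.erase_insert_empty hb, ← hℬ'.erase_insert_empty hb', ← image_eraseNone_adjoinNone, h,
    image_eraseNone_adjoinNone]

theorem IsBlockPartition.erase_empty_image_eraseNone {𝒜 : Finset (Finset (Option α))}
    (h𝒜 : IsBlockPartition 𝒜) : IsBlockPartition ((𝒜.image eraseNone).erase ∅) := by
  refine isBlockPartition_iff.2 ⟨fun v hv => nonempty_iff_ne_empty.2 (ne_of_mem_erase hv),
    fun y => ?_, fun v hv w hw y hyv hyw => ?_⟩
  · obtain ⟨u, ⟨hu, hyu⟩, -⟩ := h𝒜.2 (some y)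
    exact ⟨eraseNone u, mem_erase.2 ⟨ne_empty_of_mem (mem_eraseNone.2 hyu),
      mem_image_of_mem _ hu⟩, mem_eraseNone.2 hyu⟩
  · obtain ⟨u, hu, rfl⟩ := mem_image.1 (mem_of_mem_erase hv)
    obtain ⟨u', hu', rfl⟩ := mem_image.1 (mem_of_mem_erase hw)
    rw [h𝒜.eq_of_mem hu hu' (mem_eraseNone.1 hyv) (mem_eraseNone.1 hyw)]

theorem IsBlockPartition.exists_adjoinNone_eq {𝒜 : Finset (Finset (Option α))}
    (h𝒜 : IsBlockPartition 𝒜) :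
    ∃ ℬ b, IsBlockPartition ℬ ∧ b ∈ insert ∅ ℬ ∧ adjoinNone ℬ b = 𝒜 := by
  obtain ⟨u₀, ⟨hu₀, hnone⟩, -⟩ := h𝒜.2 none
  have hnone_notMem : ∀ u ∈ 𝒜, u ≠ u₀ → none ∉ u := fun u hu hne hn =>
    hne (h𝒜.eq_of_mem hu hu₀ hn hnone)
  refine ⟨(𝒜.image eraseNone).erase ∅, eraseNone u₀, h𝒜.erase_empty_image_eraseNone, ?_, ?_⟩
  · by_cases hb : eraseNone u₀ = ∅
    · exact hb ▸ mem_insert_self _ _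
    · exact mem_insert_of_mem (mem_erase.2 ⟨hb, mem_image_of_mem _ hu₀⟩)
  ext u
  rw [mem_adjoinNone, insertNone_eraseNone, insert_eq_of_mem hnone]
  constructor
  · rintro (rfl | ⟨v, hv, hvu₀, rfl⟩)
    · exact hu₀
    · obtain ⟨u, hu, rfl⟩ := mem_image.1 (mem_of_mem_erase hv)
      have huu₀ : u ≠ u₀ := fun h => hvu₀ (h ▸ rfl)
      rwa [map_some_eraseNone, erase_eq_of_notMem (hnone_notMem u hu huu₀)]
  · intro hu
    refine or_iff_not_imp_left.2 fun huu₀ => ?_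
    obtain ⟨y, hyu⟩ : ∃ y, some y ∈ u := by
      obtain ⟨_ | y, hx⟩ := h𝒜.1 u hu
      · exact absurd hx (hnone_notMem u hu huu₀)
      · exact ⟨y, hx⟩
    refine ⟨eraseNone u, mem_erase.2 ⟨ne_empty_of_mem (mem_eraseNone.2 hyu),
      mem_image_of_mem _ hu⟩, fun h => huu₀ ?_, ?_⟩
    · exact h𝒜.eq_of_mem hu hu₀ hyu (mem_eraseNone.1 (h ▸ mem_eraseNone.2 hyu))
    · rw [map_some_eraseNone, erase_eq_of_notMem (hnone_notMem u hu huu₀)]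

end AdjoinNone

def stirlingOp : Module.End ℤ (ℕ → ℤ) where
  toFun f
    | 0 => 0
    | K + 1 => (K + 1) * f (K + 1) + f K
  map_add' f g := by
    funext K
    cases K <;> simp only [Pi.add_apply] <;> ring
  map_smul' c f := by
    funext K
    cases K <;> simp only [Pi.smul_apply, smul_eq_mul, RingHom.id_apply] <;> ring

@[simp] theorem stirlingOp_apply_zero (f : ℕ → ℤ) : stirlingOp f 0 = 0 := rfl

@[simp] theorem stirlingOp_apply_succ (f : ℕ → ℤ) (K : ℕ) :
    stirlingOp f (K + 1) = (K + 1) * f (K + 1) + f K := rfl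

section Counting

variable [Fintype α] [DecidableEq α]

open Classical in
noncomputable def separatingPartitions (s t : Finset α) : Finset (Finset (Finset α)) :=
  {ℬ | IsBlockPartition ℬ ∧ Separates ℬ s ∧ Separates ℬ t}

theorem mem_separatingPartitions {s t : Finset α} {ℬ : Finset (Finset α)} :
    ℬ ∈ separatingPartitions s t ↔ IsBlockPartition ℬ ∧ Separates ℬ s ∧ Separates ℬ t := by
  simp [separatingPartitions]

theorem blockCounts_eq_card (s t : Finset α) (K : ℕ) :
    blockCounts α s t K = #{ℬ ∈ separatingPartitions s t | #ℬ = K} := by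
  rw [blockCounts, ← Nat.card_eq_finsetCard]
  refine congrArg _ (Nat.card_congr (Equiv.subtypeEquivRight fun ℬ => ?_))
  rw [mem_filter, mem_separatingPartitions]
  tauto

/-- A partition of `Option α` is a partition `ℬ` of `α` together with the block `b ∈ ℬ` that
`none` joins, or `b = ∅` if `none` is a singleton. -/
theorem card_separatingPartitions_insertNone (s t : Finset α) (K : ℕ) :
    #{𝒜 ∈ separatingPartitions (insertNone s) (t.map Embedding.some) | #𝒜 = K} =
      #((separatingPartitions s t).sigma
        fun ℬ => {b ∈ insert ∅ ℬ | Disjoint b s ∧ #(ℬ.erase b) + 1 = K}) := by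
  refine (card_bij (fun p _ => adjoinNone p.1 p.2) ?_ ?_ ?_).symm
  · rintro ⟨ℬ, b⟩ hp
    simp only [mem_sigma, mem_filter, mem_separatingPartitions] at hp ⊢
    obtain ⟨⟨hℬ, hs, ht⟩, hb, hbs, hK⟩ := hp
    exact ⟨⟨isBlockPartition_adjoinNone hℬ hb, separates_adjoinNone_insertNone_iff.2 ⟨hs, hbs⟩,
      (separates_adjoinNone_map_some_iff hb).2 ht⟩, card_adjoinNone.trans hK⟩
  · rintro ⟨ℬ, b⟩ hp ⟨ℬ', b'⟩ hp' h
    simp only [mem_sigma, mem_filter, mem_separatingPartitions] at hp hp'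
    obtain ⟨rfl, rfl⟩ := adjoinNone_inj hp.1.1 hp.2.1 hp'.1.1 hp'.2.1 h
    rfl
  · intro 𝒜 h𝒜
    simp only [mem_filter, mem_separatingPartitions] at h𝒜
    obtain ⟨⟨h𝒜, hs, ht⟩, hK⟩ := h𝒜
    obtain ⟨ℬ, b, hℬ, hb, rfl⟩ := h𝒜.exists_adjoinNone_eq
    rw [separates_adjoinNone_insertNone_iff] at hs
    rw [separates_adjoinNone_map_some_iff hb] at ht
    refine ⟨⟨ℬ, b⟩, ?_, rfl⟩
    simp only [mem_sigma, mem_filter, mem_separatingPartitions]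
    exact ⟨⟨hℬ, hs.1, ht⟩, hb, hs.2, card_adjoinNone.symm.trans hK⟩

theorem blockCounts_insertNone (s t : Finset α) :
    blockCounts (Option α) (insertNone s) (t.map Embedding.some) =
      (stirlingOp - (#s : Module.End ℤ (ℕ → ℤ))) (blockCounts α s t) := by
  funext K
  rw [blockCounts_eq_card, card_separatingPartitions_insertNone, card_sigma, Nat.cast_sum,
    sum_congr rfl fun ℬ hℬ => (mem_separatingPartitions.1 hℬ).1.card_filter_insert_empty
      (mem_separatingPartitions.1 hℬ).2.1 K,
    sum_add_distrib, ← sum_filter, ← sum_filter, sum_const, sum_const, LinearMap.sub_apply,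
    Pi.sub_apply, Module.End.natCast_apply, Pi.smul_apply, nsmul_eq_mul, nsmul_eq_mul,
    nsmul_eq_mul, mul_one]
  cases K with
  | zero => simp [blockCounts_eq_card, mul_comm]
  | succ K =>
    simp only [Nat.add_right_cancel_iff, stirlingOp_apply_succ, blockCounts_eq_card]
    push_cast
    ring

end Counting

theorem blockCounts_congr_left_of_card_le_one [DecidableEq α] {s s' : Finset α} (t : Finset α)
    (hs : #s ≤ 1) (hs' : #s' ≤ 1) : blockCounts α s t = blockCounts α s' t := by
  funext K
  refine congrArg _ (Nat.card_congr (Equiv.subtypeEquivRight fun 𝒜 => ?_))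
  simp only [separates_of_card_le_one hs, separates_of_card_le_one hs', true_and]

theorem blockCounts_map_equiv [DecidableEq α] [DecidableEq β] (e : α ≃ β) (s t : Finset α) :
    blockCounts β (s.map e.toEmbedding) (t.map e.toEmbedding) = blockCounts α s t := by
  funext K
  refine congrArg _
    (Nat.card_congr (Equiv.subtypeEquiv e.finsetCongr.finsetCongr fun ℬ => ?_)).symm
  simp only [isBlockPartition_iff, Separates, mem_map, Equiv.coe_toEmbedding,
    Equiv.finsetCongr_apply, forall_exists_index, and_imp, forall_apply_eq_imp_iff₂,
    exists_exists_and_eq_and, card_map, ← map_inter, map_nonempty, e.surjective.forall,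
    EmbeddingLike.apply_eq_iff_eq, exists_eq_right, map_inj]

theorem distinctBlocks_coe_iff {N : ℕ} (𝒜 : Finset (Finset (Fin N))) (s : Finset (Fin N)) :
    DistinctBlocks 𝒜 ↑s ↔ Separates 𝒜 s := by
  simp only [DistinctBlocks, Separates, card_le_one, mem_inter, mem_coe]
  exact ⟨fun h u hu a ⟨hau, has⟩ b ⟨hbu, hbs⟩ =>
      by_contra fun hab => h a has b hbs hab u hu ⟨hau, hbu⟩,
    fun h a ha b hb hab t ht ⟨hat, hbt⟩ => hab (h t ht a ⟨hat, ha⟩ b ⟨hbt, hb⟩)⟩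

theorem isSetPartition_iff {N : ℕ} {𝒜 : Finset (Finset (Fin N))} :
    IsSetPartition 𝒜 ↔ IsBlockPartition 𝒜 := Iff.rfl

noncomputable def rrBlockCounts (r₁ r₂ n : ℕ) : ℕ → ℤ :=
  blockCounts (Fin (n + r₁ + r₂)) {x | (x : ℕ) < r₁} {x | r₁ ≤ (x : ℕ) ∧ (x : ℕ) < r₁ + r₂}

theorem rrStirling_eq_rrBlockCounts (r₁ r₂ n k : ℕ) :
    (rrStirling r₁ r₂ n k : ℤ) = rrBlockCounts r₁ r₂ n (k + r₂) := by
  refine congrArg _ (Nat.card_congr (Equiv.subtypeEquivRight fun 𝒜 => ?_))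
  rw [← distinctBlocks_coe_iff, ← distinctBlocks_coe_iff, coe_filter_univ, coe_filter_univ]
  rfl

theorem rStirling_eq_rrBlockCounts_zero (r₂ m k : ℕ) :
    (rStirling r₂ m k : ℤ) = rrBlockCounts 0 r₂ m (k + r₂) := by
  refine congrArg _ (Nat.card_congr (Equiv.subtypeEquivRight fun 𝒜 => ?_))
  rw [← distinctBlocks_coe_iff, ← distinctBlocks_coe_iff, coe_filter_univ, coe_filter_univ]
  simp [isSetPartition_iff, DistinctBlocks]

theorem rrBlockCounts_succ_left (r₁ r₂ n : ℕ) :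
    rrBlockCounts (r₁ + 1) r₂ n =
      (stirlingOp - (r₁ : Module.End ℤ (ℕ → ℤ))) (rrBlockCounts r₁ r₂ n) := by
  let e : Fin (n + (r₁ + 1) + r₂) ≃ Option (Fin (n + r₁ + r₂)) :=
    (finCongr (by omega)).trans (finSuccEquiv _)
  have hlow : ({x | (x : ℕ) < r₁ + 1} : Finset (Fin (n + (r₁ + 1) + r₂))).map e.toEmbedding =
      insertNone ({x | (x : ℕ) < r₁} : Finset (Fin (n + r₁ + r₂))) := by
    ext x
    rw [mem_map_equiv]
    cases x <;> simp [e]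
  have hmid : ({x | r₁ + 1 ≤ (x : ℕ) ∧ (x : ℕ) < r₁ + 1 + r₂} :
      Finset (Fin (n + (r₁ + 1) + r₂))).map e.toEmbedding =
      ({x | r₁ ≤ (x : ℕ) ∧ (x : ℕ) < r₁ + r₂} : Finset (Fin (n + r₁ + r₂))).map Embedding.some := by
    ext x
    rw [mem_map_equiv]
    cases x <;> simp [e, add_right_comm r₁ 1 r₂]
  rw [rrBlockCounts, ← blockCounts_map_equiv e, hlow, hmid, blockCounts_insertNone,
    Fin.card_filter_val_lt, min_eq_right (by omega)]
  rfl

theorem rrBlockCounts_zero_succ (r₂ m : ℕ) :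
    rrBlockCounts 0 r₂ (m + 1) = stirlingOp (rrBlockCounts 0 r₂ m) := by
  let e : Fin (m + 1 + 0 + r₂) ≃ Option (Fin (m + 0 + r₂)) :=
    (finCongr (by omega)).trans finSuccEquivLast
  have hmid : ({x | 0 ≤ (x : ℕ) ∧ (x : ℕ) < 0 + r₂} :
      Finset (Fin (m + 1 + 0 + r₂))).map e.toEmbedding =
      ({x | 0 ≤ (x : ℕ) ∧ (x : ℕ) < 0 + r₂} : Finset (Fin (m + 0 + r₂))).map Embedding.some := by
    ext x
    rw [mem_map_equiv]
    cases x <;> simp [e]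
  simp only [rrBlockCounts, Nat.not_lt_zero, filter_false]
  rw [← blockCounts_map_equiv e, map_empty, hmid,
    blockCounts_congr_left_of_card_le_one _ (card_empty.trans_le zero_le_one)
      (card_insertNone ∅).le, blockCounts_insertNone, card_empty, Nat.cast_zero, sub_zero]

theorem sabs_eq_stirlingFirst : sabs = Nat.stirlingFirst := by
  funext n k
  induction n generalizing k with
  | zero => cases k <;> rfl
  | succ n ih =>
    cases k with
    | zero => rfl
    | succ k => rw [sabs, Nat.stirlingFirst_succ_succ, ih, ih]

theorem coeff_descPochhammer_int (n j : ℕ) :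
    (descPochhammer ℤ n).coeff j = (-1) ^ (n + j) * Nat.stirlingFirst n j := by
  induction n generalizing j with
  | zero => cases j <;> simp [coeff_one]
  | succ n ih =>
    rw [descPochhammer_succ_right, ← C_eq_natCast]
    cases j with
    | zero =>
      rw [mul_coeff_zero, ih]
      cases n <;> simp
    | succ j =>
      rw [coeff_mul_X_sub_C, ih, ih, Nat.stirlingFirst_succ_succ]
      push_cast
      ring

theorem descPochhammer_int_eq_sum (n : ℕ) :
    descPochhammer ℤ n =
      ∑ j ∈ range (n + 1), C ((-1) ^ (n - j) * (Nat.stirlingFirst n j : ℤ)) * X ^ j := by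
  rw [as_sum_range_C_mul_X_pow (descPochhammer ℤ n), descPochhammer_natDegree]
  refine sum_congr rfl fun j hj => ?_
  obtain ⟨i, rfl⟩ := Nat.exists_eq_add_of_le (mem_range_succ_iff.1 hj)
  rw [coeff_descPochhammer_int, Nat.add_sub_cancel_left, show j + i + j = i + 2 * j by ring,
    pow_add, pow_mul, neg_one_sq, one_pow, mul_one]

theorem rrBlockCounts_zero_add (r₂ n j : ℕ) :
    rrBlockCounts 0 r₂ (n + j) = (stirlingOp ^ j) (rrBlockCounts 0 r₂ n) := by
  induction j with
  | zero => rfl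
  | succ j ih => rw [← add_assoc, rrBlockCounts_zero_succ, ih, pow_succ', Module.End.mul_apply]

theorem rrBlockCounts_eq_aeval_descPochhammer (r₁ r₂ n : ℕ) :
    rrBlockCounts r₁ r₂ n = aeval stirlingOp (descPochhammer ℤ r₁) (rrBlockCounts 0 r₂ n) := by
  induction r₁ with
  | zero => rw [descPochhammer_zero, map_one, Module.End.one_apply]
  | succ r ih =>
    rw [rrBlockCounts_succ_left, ih, descPochhammer_succ_right, mul_comm, map_mul,
      Module.End.mul_apply, map_sub, aeval_X, map_natCast]

theorem rrBlockCounts_eq_sum (r₁ r₂ n : ℕ) :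
    rrBlockCounts r₁ r₂ n = ∑ j ∈ range (r₁ + 1),
      ((-1) ^ (r₁ - j) * (Nat.stirlingFirst r₁ j : ℤ)) • rrBlockCounts 0 r₂ (n + j) := by
  rw [rrBlockCounts_eq_aeval_descPochhammer, descPochhammer_int_eq_sum, map_sum,
    LinearMap.sum_apply]
  refine sum_congr rfl fun j _ => ?_
  rw [map_mul, aeval_C, aeval_X_pow, Module.End.mul_apply, Module.algebraMap_end_apply,
    rrBlockCounts_zero_add]

theorem rrStirling_eq_signed_sum_rStirling_general (n k r₁ r₂ : ℕ) :
    (rrStirling r₁ r₂ n k : ℤ) =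
      ∑ j ∈ range (r₁ + 1),
        (-1 : ℤ) ^ (r₁ - j) * (sabs r₁ j : ℤ) * (rStirling r₂ (n + j) k : ℤ) := by
  rw [rrStirling_eq_rrBlockCounts, rrBlockCounts_eq_sum, Finset.sum_apply, sabs_eq_stirlingFirst]
  refine sum_congr rfl fun j _ => ?_
  rw [Pi.smul_apply, smul_eq_mul, rStirling_eq_rrBlockCounts_zero]

/-- ${n+r_1+r_2 \brace k+r_2}_{r_1,r_2}
  = \sum_{j=0}^{r_1} (-1)^{r_1-j} |s(r_1,j)| {n+j+r_2 \brace k+r_2}_{r_2}$. -/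
theorem rrStirling_eq_signed_sum_rStirling (n k r₁ r₂ : ℕ) (h : r₁ ≤ r₂) :
    (rrStirling r₁ r₂ n k : ℤ) =
      ∑ j ∈ range (r₁ + 1),
        (-1 : ℤ) ^ (r₁ - j) * (sabs r₁ j : ℤ) * (rStirling r₂ (n + j) k : ℤ) :=
  rrStirling_eq_signed_sum_rStirling_general n k r₁ r₂
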